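/- In the cooperative model with p < 1/2, Z_n tends to 0 almost surely; in particular simultaneous survival of both types is impossible. -/

import Mathlib

open MeasureTheory ProbabilityTheory Filter
open scoped ENNReal

/-- Convolution of two measures on `ℕ`. -/
noncomputable def mconv (μ ν : Measure ℕ) : Measure ℕ :=
  Measure.map (fun p : ℕ × ℕ => p.1 + p.2) (μ.prod ν)

/-- `i`-fold convolution power of a measure on `ℕ`. -/
noncomputable def convPow (ν : Measure ℕ) : ℕ → Measure ℕ
  | 0 => Measure.dirac 0
  | n + 1 => mconv (convPow ν n) ν

/-- The Bernoulli measure with parameter `r` on `ℕ`. -/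
noncomputable def bern (r : ℝ) : Measure ℕ :=
  ENNReal.ofReal (1 - r) • Measure.dirac 0 + ENNReal.ofReal r • Measure.dirac 1

/-- The binomial distribution `Bin(n, r)` as a measure on `ℕ`. -/
noncomputable def binomM (n : ℕ) (r : ℝ) : Measure ℕ := convPow (bern r) n

/-- Transition measure of the cooperative model from state `(x, y)`:
`Ber(2,q)^{*(x+y)} ⊗ Ber(2,p)^{*min(x,y)}`. -/
noncomputable def coopStep (p q : ℝ) (x y : ℕ) : Measure (ℕ × ℕ) :=
  (binomM (2 * (x + y)) q).prod (binomM (2 * min x y) p)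

/-- `(XY n)` is the cooperative two-type Markov chain with parameters `p, q`
started from `(x, y)`, characterized by its finite-dimensional distributions. -/
def IsCoop {Ω : Type*} [MeasurableSpace Ω] (P : Measure Ω)
    (XY : ℕ → Ω → ℕ × ℕ) (p q : ℝ) (x y : ℕ) : Prop :=
  ∀ n : ℕ, ∀ a : ℕ → ℕ × ℕ,
    P {ω | ∀ k ≤ n, XY k ω = a k} =
      (if a 0 = (x, y) then 1 else 0) *
        ∏ k ∈ Finset.range n, coopStep p q (a k).1 (a k).2 {a (k + 1)}


/-!
Since `Z_{n+1} ≤ Y_{n+1}` and `Y_{n+1}` has conditional mean `2p Z_n`, induction gives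
`E[Z_n] ≤ (2p)^n Z_0`. By Markov's inequality `P(Z_n ≠ 0) ≤ (2p)^n Z_0`, which is summable for
`p < 1/2`, so by Borel–Cantelli `Z_n = 0` eventually, almost surely. As the chain is described
only by its cylinder probabilities, `E[Z_n]` is computed as a sum over paths of length `n`.
-/

section PathSums

variable {α : Type*}

lemma extend_val_apply {n : ℕ} (v : Fin n → α) (g : ℕ → α) {k : ℕ} (hk : k < n) :
    Function.extend Fin.val v g k = v ⟨k, hk⟩ :=
  Fin.val_injective.extend_apply v g ⟨k, hk⟩

variable [MeasurableSpace α] [DecidableEq α]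

/-- The probability of the first `n` steps of the path `a` under the chain with kernel `κ`
started at `a₀`, as in `IsCoop`. -/
noncomputable def pathWeight (κ : α → Measure α) (a₀ : α) (n : ℕ) (a : ℕ → α) : ℝ≥0∞ :=
  (if a 0 = a₀ then 1 else 0) * ∏ k ∈ Finset.range n, κ (a k) {a (k + 1)}

/-- `E[f(X n)]`, computed as a sum over the paths of length `n`; a path `v` is extended
beyond time `n` by the constant `a₀`, which `pathWeight κ a₀ n` does not see. -/
noncomputable def pathExpectation (κ : α → Measure α) (a₀ : α) (f : α → ℝ≥0∞) (n : ℕ) :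
    ℝ≥0∞ :=
  ∑' v : Fin (n + 1) → α,
    f (v (Fin.last n)) * pathWeight κ a₀ n (Function.extend Fin.val v fun _ => a₀)

variable {κ : α → Measure α} {a₀ : α}

lemma pathWeight_congr {n : ℕ} {a a' : ℕ → α} (h : ∀ k ≤ n, a k = a' k) :
    pathWeight κ a₀ n a = pathWeight κ a₀ n a' := by
  unfold pathWeight
  rw [h 0 n.zero_le]
  congr 1
  refine Finset.prod_congr rfl fun k hk => ?_
  rw [Finset.mem_range] at hk
  rw [h k hk.le, h (k + 1) hk]

lemma pathWeight_extend_snoc {n : ℕ} (w : Fin (n + 1) → α) (b : α) :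
    pathWeight κ a₀ (n + 1) (Function.extend Fin.val (Fin.snoc w b : Fin (n + 2) → α)
        fun _ => a₀) =
      pathWeight κ a₀ n (Function.extend Fin.val w fun _ => a₀) * κ (w (Fin.last n)) {b} := by
  have h_init : ∀ k ≤ n, Function.extend Fin.val (Fin.snoc w b : Fin (n + 2) → α)
      (fun _ => a₀) k = Function.extend Fin.val w (fun _ => a₀) k := fun k hk => by
    rw [extend_val_apply _ _ (by omega : k < n + 2), extend_val_apply _ _ (by omega : k < n + 1)]
    exact Fin.snoc_castSucc (α := fun _ => α) b w ⟨k, by omega⟩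
  have h_last : Function.extend Fin.val (Fin.snoc w b : Fin (n + 2) → α)
      (fun _ => a₀) (n + 1) = b := by
    rw [extend_val_apply _ _ (by omega : n + 1 < n + 2)]
    exact Fin.snoc_last (α := fun _ => α) b w
  have h_prev : Function.extend Fin.val (Fin.snoc w b : Fin (n + 2) → α)
      (fun _ => a₀) n = w (Fin.last n) := by
    rw [h_init n le_rfl, extend_val_apply _ _ (by omega : n < n + 1)]
    rfl
  rw [pathWeight, Finset.prod_range_succ, ← mul_assoc, h_prev, h_last]
  exact congrArg (· * _) (pathWeight_congr h_init)

lemma pathExpectation_zero (f : α → ℝ≥0∞) : pathExpectation κ a₀ f 0 = f a₀ := by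
  set e := (Equiv.funUnique (Fin 1) α).symm
  have h_term : ∀ b : α, f (e b (Fin.last 0)) *
      pathWeight κ a₀ 0 (Function.extend Fin.val (e b) fun _ => a₀) =
      if b = a₀ then f a₀ else 0 := fun b => by
    rw [pathWeight, extend_val_apply _ _ Nat.zero_lt_one]
    change f b * ((if b = a₀ then 1 else 0) * 1) = _
    split_ifs with hb <;> simp [hb]
  rw [pathExpectation, ← e.tsum_eq, tsum_congr h_term, tsum_ite_eq]

variable [Countable α]

/-- Markov's inequality; it needs no measurability of `X`, only the union bound over the
countably many paths. -/
lemma measure_one_le_le_pathExpectation {Ω : Type*} [MeasurableSpace Ω] {P : Measure Ω}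
    {X : ℕ → Ω → α}
    (hX : ∀ n (a : ℕ → α), P {ω | ∀ k ≤ n, X k ω = a k} = pathWeight κ a₀ n a)
    (f : α → ℝ≥0∞) (n : ℕ) : P {ω | 1 ≤ f (X n ω)} ≤ pathExpectation κ a₀ f n := by
  set cyl := fun v : Fin (n + 1) → α =>
    {ω | ∀ k ≤ n, X k ω = Function.extend Fin.val v (fun _ => a₀) k}
  have h_cover : {ω | 1 ≤ f (X n ω)} ⊆
      ⋃ v : Fin (n + 1) → α, cyl v ∩ {_ω | 1 ≤ f (v (Fin.last n))} :=
    fun ω hω => Set.mem_iUnion.2 ⟨fun i => X i ω,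
      fun k hk => (extend_val_apply (fun i : Fin (n + 1) => X i ω) _ (by omega)).symm, hω⟩
  refine (measure_mono h_cover).trans ((measure_iUnion_le _).trans ?_)
  refine ENNReal.tsum_le_tsum fun v => ?_
  by_cases hv : 1 ≤ f (v (Fin.last n))
  · calc P (cyl v ∩ {_ω | 1 ≤ f (v (Fin.last n))})
        ≤ P (cyl v) := measure_mono Set.inter_subset_left
      _ = pathWeight κ a₀ n (Function.extend Fin.val v fun _ => a₀) := hX n _
      _ ≤ _ := le_mul_of_one_le_left zero_le hv
  · simp [hv]

variable [MeasurableSingletonClass α]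

lemma pathExpectation_succ_le {f : α → ℝ≥0∞} {r : ℝ≥0∞} (hf : ∀ a, ∫⁻ b, f b ∂κ a ≤ r * f a)
    (n : ℕ) : pathExpectation κ a₀ f (n + 1) ≤ r * pathExpectation κ a₀ f n := by
  set W := fun w : Fin (n + 1) → α => pathWeight κ a₀ n (Function.extend Fin.val w fun _ => a₀)
  calc pathExpectation κ a₀ f (n + 1)
      = ∑' (b : α) (w : Fin (n + 1) → α), f b * (W w * κ (w (Fin.last n)) {b}) := by
        rw [pathExpectation, ← (Fin.snocEquiv fun _ => α).tsum_eq, ENNReal.tsum_prod']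
        refine tsum_congr fun b => tsum_congr fun w => ?_
        change f ((Fin.snoc w b : Fin (n + 2) → α) (Fin.last (n + 1))) *
          pathWeight κ a₀ (n + 1) (Function.extend Fin.val (Fin.snoc w b : Fin (n + 2) → α)
            fun _ => a₀) = _
        rw [Fin.snoc_last, pathWeight_extend_snoc]
    _ = ∑' w : Fin (n + 1) → α, W w * ∫⁻ b, f b ∂κ (w (Fin.last n)) := by
        rw [ENNReal.tsum_comm]
        refine tsum_congr fun w => ?_
        rw [lintegral_countable', ← ENNReal.tsum_mul_left]
        exact tsum_congr fun b => by ring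
    _ ≤ ∑' w : Fin (n + 1) → α, W w * (r * f (w (Fin.last n))) :=
        ENNReal.tsum_le_tsum fun w => mul_le_mul_right (hf _) _
    _ = r * pathExpectation κ a₀ f n := by
        rw [pathExpectation, ← ENNReal.tsum_mul_left]
        exact tsum_congr fun w => by ring

lemma pathExpectation_le {f : α → ℝ≥0∞} {r : ℝ≥0∞} (hf : ∀ a, ∫⁻ b, f b ∂κ a ≤ r * f a)
    (n : ℕ) : pathExpectation κ a₀ f n ≤ r ^ n * f a₀ := by
  induction n with
  | zero => simp [pathExpectation_zero]
  | succ n ih =>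
      calc pathExpectation κ a₀ f (n + 1) ≤ r * pathExpectation κ a₀ f n :=
            pathExpectation_succ_le hf n
        _ ≤ r * (r ^ n * f a₀) := mul_le_mul_right ih r
        _ = r ^ (n + 1) * f a₀ := by ring

end PathSums

section Binomial

lemma isProbabilityMeasure_bern {r : ℝ} (h0 : 0 ≤ r) (h1 : r ≤ 1) :
    IsProbabilityMeasure (bern r) :=
  ⟨by simp [bern, ← ENNReal.ofReal_add (sub_nonneg.2 h1) h0]⟩

lemma isProbabilityMeasure_mconv (μ ν : Measure ℕ) [IsProbabilityMeasure μ]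
    [IsProbabilityMeasure ν] : IsProbabilityMeasure (mconv μ ν) :=
  Measure.isProbabilityMeasure_map Measurable.of_discrete.aemeasurable

lemma isProbabilityMeasure_binomM (n : ℕ) {r : ℝ} (h0 : 0 ≤ r) (h1 : r ≤ 1) :
    IsProbabilityMeasure (binomM n r) := by
  induction n with
  | zero => exact ⟨by simp [binomM, convPow]⟩
  | succ n ih =>
      have := isProbabilityMeasure_bern h0 h1
      exact isProbabilityMeasure_mconv (binomM n r) (bern r)

lemma lintegral_natCast_bern (r : ℝ) : ∫⁻ k, (k : ℝ≥0∞) ∂bern r = ENNReal.ofReal r := by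
  simp [bern, lintegral_dirac]

lemma lintegral_natCast_mconv (μ ν : Measure ℕ) [IsProbabilityMeasure μ]
    [IsProbabilityMeasure ν] :
    ∫⁻ k, (k : ℝ≥0∞) ∂mconv μ ν = ∫⁻ k, (k : ℝ≥0∞) ∂μ + ∫⁻ k, (k : ℝ≥0∞) ∂ν := by
  rw [mconv, lintegral_map Measurable.of_discrete Measurable.of_discrete]
  simp only [Nat.cast_add]
  rw [lintegral_add_left Measurable.of_discrete,
    lintegral_prod _ Measurable.of_discrete.aemeasurable,
    lintegral_prod _ Measurable.of_discrete.aemeasurable]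
  simp

lemma lintegral_natCast_binomM (n : ℕ) {r : ℝ} (h0 : 0 ≤ r) (h1 : r ≤ 1) :
    ∫⁻ k, (k : ℝ≥0∞) ∂binomM n r = n * ENNReal.ofReal r := by
  induction n with
  | zero => simp [binomM, convPow, lintegral_dirac]
  | succ n ih =>
      have := isProbabilityMeasure_binomM n h0 h1
      have := isProbabilityMeasure_bern h0 h1
      change ∫⁻ k, (k : ℝ≥0∞) ∂mconv (binomM n r) (bern r) = _
      rw [lintegral_natCast_mconv, ih, lintegral_natCast_bern]
      push_cast
      ring

end Binomial

/-- `E[Z_{n+1} | F_n] ≤ E[Y_{n+1} | F_n] = 2p Z_n`. -/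
lemma lintegral_min_coopStep_le {p q : ℝ} (hp0 : 0 ≤ p) (hp1 : p ≤ 1) (hq0 : 0 ≤ q)
    (hq1 : q ≤ 1) (u v : ℕ) :
    ∫⁻ b, ((min b.1 b.2 : ℕ) : ℝ≥0∞) ∂coopStep p q u v ≤
      ENNReal.ofReal (2 * p) * ((min u v : ℕ) : ℝ≥0∞) := by
  have := isProbabilityMeasure_binomM (2 * (u + v)) hq0 hq1
  calc ∫⁻ b, ((min b.1 b.2 : ℕ) : ℝ≥0∞) ∂coopStep p q u v
      ≤ ∫⁻ b, (b.2 : ℝ≥0∞) ∂coopStep p q u v :=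
        lintegral_mono fun b => Nat.cast_le.2 (min_le_right _ _)
    _ = ∫⁻ k, (k : ℝ≥0∞) ∂binomM (2 * min u v) p := by
        rw [coopStep, lintegral_prod _ Measurable.of_discrete.aemeasurable]
        simp
    _ = ENNReal.ofReal (2 * p) * ((min u v : ℕ) : ℝ≥0∞) := by
        rw [lintegral_natCast_binomM _ hp0 hp1, ENNReal.ofReal_mul zero_le_two,
          ENNReal.ofReal_ofNat]
        push_cast
        ring

lemma measure_coop_min_ne_zero_le {Ω : Type*} [MeasurableSpace Ω] {P : Measure Ω}
    {p q : ℝ} (hp0 : 0 ≤ p) (hp1 : p ≤ 1) (hq0 : 0 ≤ q) (hq1 : q ≤ 1) {x y : ℕ}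
    {XY : ℕ → Ω → ℕ × ℕ} (hXY : IsCoop P XY p q x y) (n : ℕ) :
    P {ω | min (XY n ω).1 (XY n ω).2 ≠ 0} ≤
      ENNReal.ofReal (2 * p) ^ n * ((min x y : ℕ) : ℝ≥0∞) := by
  have h_event : {ω | min (XY n ω).1 (XY n ω).2 ≠ 0} =
      {ω | 1 ≤ (((min (XY n ω).1 (XY n ω).2 : ℕ)) : ℝ≥0∞)} := by
    ext ω
    simp [Nat.one_le_iff_ne_zero]
  rw [h_event]
  exact (measure_one_le_le_pathExpectation (fun n a => hXY n a) _ n).trans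
    (pathExpectation_le (fun a => lintegral_min_coopStep_le hp0 hp1 hq0 hq1 a.1 a.2) n)

theorem coop_subcritical_extinction_general {Ω : Type*} [MeasurableSpace Ω]
    (P : Measure Ω)
    (p q : ℝ) (hp0 : 0 ≤ p) (hp : p < 1 / 2) (hq0 : 0 ≤ q) (hq1 : q ≤ 1)
    (x y : ℕ) (XY : ℕ → Ω → ℕ × ℕ) (hXY : IsCoop P XY p q x y) :
    (∀ᵐ ω ∂P, Tendsto (fun n => min (XY n ω).1 (XY n ω).2) atTop (nhds 0)) ∧
      P {ω | ∀ n : ℕ, min (XY n ω).1 (XY n ω).2 ≠ 0} = 0 := by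
  set r := ENNReal.ofReal (2 * p)
  have hr : r < 1 := ENNReal.ofReal_lt_one.2 (by linarith)
  have h_bound := measure_coop_min_ne_zero_le hp0 (by linarith) hq0 hq1 hXY
  have h_summable : ∑' n, P {ω | min (XY n ω).1 (XY n ω).2 ≠ 0} ≠ ∞ := by
    refine ne_top_of_le_ne_top ?_ (ENNReal.tsum_le_tsum h_bound)
    rw [ENNReal.tsum_mul_right, ENNReal.tsum_geometric]
    exact ENNReal.mul_ne_top (ENNReal.inv_ne_top.2 (tsub_pos_of_lt hr).ne')
      (ENNReal.natCast_ne_top _)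
  constructor
  · filter_upwards [ae_eventually_notMem h_summable] with ω hω
    exact tendsto_const_nhds.congr' (hω.mono fun n hn => (not_not.1 hn).symm)
  · have h_lim : Tendsto (fun n => r ^ n * ((min x y : ℕ) : ℝ≥0∞)) atTop (nhds 0) := by
      simpa using ENNReal.Tendsto.mul_const (ENNReal.tendsto_pow_atTop_nhds_zero_of_lt_one hr)
        (Or.inr (ENNReal.natCast_ne_top _))
    refine le_antisymm (ge_of_tendsto' h_lim fun n => ?_) zero_le
    exact (measure_mono fun ω (hω : ∀ m, min (XY m ω).1 (XY m ω).2 ≠ 0) => hω n).trans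
      (h_bound n)

/-- In the cooperative model with `p < 1/2`, `Z n = min(X n, Y n)` tends to `0`
almost surely; in particular simultaneous survival of both types is
impossible. -/
theorem coop_subcritical_extinction {Ω : Type*} [MeasurableSpace Ω]
    (P : Measure Ω) [IsProbabilityMeasure P]
    (p q : ℝ) (hp0 : 0 ≤ p) (hp : p < 1 / 2) (hq0 : 0 ≤ q) (hq1 : q ≤ 1)
    (x y : ℕ) (XY : ℕ → Ω → ℕ × ℕ) (hXY : IsCoop P XY p q x y) :
    (∀ᵐ ω ∂P, Tendsto (fun n => min (XY n ω).1 (XY n ω).2) atTop (nhds 0)) ∧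
      P {ω | ∀ n : ℕ, min (XY n ω).1 (XY n ω).2 ≠ 0} = 0 :=
  coop_subcritical_extinction_general P p q hp0 hp hq0 hq1 x y XY hXY
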